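/- arXiv:1002.1266 — 5 statements merged into one kernel-verified Lean document; each statement's English description precedes it below -/
import Mathlib

section
/- Let R be a commutative local ring with maximal ideal J in which 3 is invertible. Let a, b be n×n matrices over R with a³ = b³ = 1, such that all entries of a lie in the prime subring of R (the subring generated by 1), and a ≡ b modulo J (i.e., a − b has all entries in J). Let V = Rⁿ, and let V₀ = e_a·V, V₁ = (1−e_a)·V and V₀′ = e_b·V, V₁′ = (1−e_b)·V be the decompositions of V with respect to a and b, where e_a = (1/3)(1 + a + a²) and e_b = (1/3)(1 + b + b²). Then the free R-modules satisfy rank V₀′ = rank V₀ and rank V₁′ = rank V₁. -/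
open Matrix IsLocalRing

section Aux

variable {R : Type*} [CommRing R] [IsLocalRing R] {n : ℕ}

/-- If all entries of `d` lie in the maximal ideal, so do entries of `m * d`. -/
lemma aux_mul_left (m d : Matrix (Fin n) (Fin n) R)
    (hd : ∀ i j, d i j ∈ maximalIdeal R) : ∀ i j, (m * d) i j ∈ maximalIdeal R := by
  intro i j
  rw [Matrix.mul_apply]
  exact Ideal.sum_mem _ fun k _ => Ideal.mul_mem_left _ _ (hd k j)

lemma aux_mul_right (m d : Matrix (Fin n) (Fin n) R)
    (hd : ∀ i j, d i j ∈ maximalIdeal R) : ∀ i j, (d * m) i j ∈ maximalIdeal R := by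
  intro i j
  rw [Matrix.mul_apply]
  exact Ideal.sum_mem _ fun k _ => Ideal.mul_mem_right _ _ (hd i k)

/-- A square matrix congruent to `1` modulo the maximal ideal has unit determinant. -/
lemma aux_det_isUnit (u : Matrix (Fin n) (Fin n) R)
    (hu : ∀ i j, (u - 1) i j ∈ maximalIdeal R) : IsUnit u.det := by
  by_contra h
  have hmem : u.det ∈ maximalIdeal R := h
  have h1 : (residue R) u.det = 0 := (Ideal.Quotient.eq_zero_iff_mem).mpr hmem
  have h2 : ((residue R).mapMatrix u) = 1 := by
    ext i j
    have h0 : residue R ((u - 1) i j) = 0 := Ideal.Quotient.eq_zero_iff_mem.mpr (hu i j)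
    rw [Matrix.sub_apply, map_sub, sub_eq_zero] at h0
    simp only [RingHom.mapMatrix_apply, Matrix.map_apply]
    rw [h0]
    by_cases hij : i = j <;> simp [Matrix.one_apply, hij]
  have h4 : (residue R) u.det = 1 := by
    rw [RingHom.map_det, h2, Matrix.det_one]
  rw [h1] at h4
  exact zero_ne_one h4

end Aux

/-- Over a commutative local ring `R` with `3` invertible, if `a, b` are `n × n`
matrices with `a³ = b³ = 1`, the entries of `a` lie in the prime subring, and
`a ≡ b` modulo the maximal ideal, then the two summands of the decompositions of
`Rⁿ` determined by `a` and by `b` have the same ranks. -/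
theorem stmt2 {R : Type*} [CommRing R] [IsLocalRing R] (n : ℕ) (h3 : IsUnit (3 : R))
    (a b : Matrix (Fin n) (Fin n) R) (ha : a ^ 3 = 1) (hb : b ^ 3 = 1)
    (haZ : ∀ i j, a i j ∈ (⊥ : Subring R))
    (hab : ∀ i j, a i j - b i j ∈ maximalIdeal R)
    (ea eb : Matrix (Fin n) (Fin n) R)
    (hea : ea = Ring.inverse (3 : R) • (1 + a + a ^ 2))
    (heb : eb = Ring.inverse (3 : R) • (1 + b + b ^ 2)) :
    Module.finrank R (LinearMap.range eb.mulVecLin)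
      = Module.finrank R (LinearMap.range ea.mulVecLin) ∧
    Module.finrank R (LinearMap.range (1 - eb).mulVecLin)
      = Module.finrank R (LinearMap.range (1 - ea).mulVecLin) := by
  set t : R := Ring.inverse (3 : R) with ht
  have h3t : (3 : R) * t = 1 := Ring.mul_inverse_cancel _ h3
  -- idempotency
  have idem : ∀ c : Matrix (Fin n) (Fin n) R, c ^ 3 = 1 →
      (t • (1 + c + c ^ 2)) * (t • (1 + c + c ^ 2)) = t • (1 + c + c ^ 2) := by
    intro c hc
    have hsq : (1 + c + c ^ 2) * (1 + c + c ^ 2) = (3 : R) • (1 + c + c ^ 2) := by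
      have h4 : c ^ 4 = c := by
        rw [show (4:ℕ) = 3 + 1 from rfl, pow_add, hc, one_mul, pow_one]
      have h34 : c ^ 2 * c ^ 2 = c := by rw [← pow_add]; exact h4
      have h3c : c * c ^ 2 = 1 := by rw [← pow_succ', hc]
      have h3c' : c ^ 2 * c = 1 := by rw [← pow_succ, hc]
      have hcc : c * c = c ^ 2 := (sq c).symm
      simp only [mul_add, add_mul, one_mul, mul_one, h34, h3c, h3c', hcc]
      match_scalars <;> ring
    rw [Matrix.smul_mul, Matrix.mul_smul, hsq]
    rw [smul_smul, smul_smul]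
    congr 1
    rw [mul_assoc, mul_comm t 3, h3t, mul_one]
  have hee : ea * ea = ea := by rw [hea]; exact idem a ha
  have hff : eb * eb = eb := by rw [heb]; exact idem b hb
  -- the difference d = ea - eb has entries in the maximal ideal
  have hd : ∀ i j, (ea - eb) i j ∈ maximalIdeal R := by
    have hdecomp : ea - eb = t • ((a - b) + (a * (a - b) + (a - b) * b)) := by
      rw [hea, heb, ← smul_sub]
      congr 1
      have h2 : a * (a - b) + (a - b) * b = a ^ 2 - b ^ 2 := by noncomm_ring
      rw [h2]; noncomm_ring
    intro i j
    rw [hdecomp]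
    have hsum : ∀ i j, ((a - b) + (a * (a - b) + (a - b) * b)) i j ∈ maximalIdeal R := by
      intro i j
      simp only [Matrix.add_apply]
      refine Ideal.add_mem _ (hab i j) (Ideal.add_mem _ ?_ ?_)
      · exact aux_mul_left a (a - b) (fun i j => hab i j) i j
      · rw [Matrix.mul_apply]
        exact Ideal.sum_mem _ fun k _ => Ideal.mul_mem_right _ _ (hab i k)
    simpa using Ideal.mul_mem_left _ t (hsum i j)
  -- the conjugating matrix
  set u : Matrix (Fin n) (Fin n) R := eb * ea + (1 - eb) * (1 - ea) with hu
  have hu1 : ∀ i j, (u - 1) i j ∈ maximalIdeal R := by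
    have hkey : u - 1 = eb * (ea - eb) - (ea - eb) * ea := by
      rw [hu]
      have : eb * (ea - eb) - (ea - eb) * ea
          = eb * ea - eb * eb - (ea * ea) + eb * ea := by noncomm_ring
      rw [this, hee, hff]
      noncomm_ring
    intro i j
    rw [hkey]
    simp only [Matrix.sub_apply]
    refine Ideal.sub_mem _ ?_ ?_
    · exact aux_mul_left eb (ea - eb) hd i j
    · rw [Matrix.mul_apply]
      exact Ideal.sum_mem _ fun k _ => Ideal.mul_mem_right _ _ (hd i k)
  have hUdet : IsUnit u.det := aux_det_isUnit u hu1
  -- u intertwines ea and eb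
  have hint : u * ea = eb * u := by
    rw [hu]
    have h1 : (eb * ea + (1 - eb) * (1 - ea)) * ea = eb * ea := by
      have : (1 - ea) * ea = 0 := by rw [sub_mul, one_mul, hee, sub_self]
      rw [add_mul, mul_assoc eb ea ea, hee, mul_assoc, this, mul_zero, add_zero]
    have h2 : eb * (eb * ea + (1 - eb) * (1 - ea)) = eb * ea := by
      have : eb * (1 - eb) = 0 := by rw [mul_sub, mul_one, hff, sub_self]
      rw [mul_add, ← mul_assoc eb eb ea, hff, ← mul_assoc, this, zero_mul, add_zero]
    rw [h1, h2]
  have hUinv := Matrix.mul_nonsing_inv u hUdet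
  have hUinv' := Matrix.nonsing_inv_mul u hUdet
  have hUinvdet : IsUnit (u⁻¹).det := by
    exact u.isUnit_nonsing_inv_det hUdet
  have hconj : eb = u * ea * u⁻¹ := by
    rw [hint, mul_assoc, hUinv, mul_one]
  have hconj' : (1 : Matrix (Fin n) (Fin n) R) - eb = u * (1 - ea) * u⁻¹ := by
    rw [mul_sub, mul_one, sub_mul, hint, mul_assoc, hUinv, mul_one]
  constructor
  · show Matrix.rank eb = Matrix.rank ea
    rw [hconj, Matrix.rank_mul_eq_left_of_isUnit_det _ _ hUinvdet,
      Matrix.rank_mul_eq_right_of_isUnit_det _ _ hUdet]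
  · show Matrix.rank (1 - eb) = Matrix.rank (1 - ea)
    rw [hconj', Matrix.rank_mul_eq_left_of_isUnit_det _ _ hUinvdet,
      Matrix.rank_mul_eq_right_of_isUnit_det _ _ hUdet]
end

section
/- Let R be a commutative local ring with maximal ideal J in which 2 is not invertible. Let a, b be n×n matrices over R with a³ = b³ = 1, such that all entries of a lie in the prime subring of R (the subring generated by 1), and a ≡ b modulo J (i.e., a − b has all entries in J). Then a and b are conjugate in GL_n(R): there exists g ∈ GL_n(R) with b = g·a·g⁻¹. -/
open Matrix IsLocalRing Finset

/-!
If `a ^ m = b ^ m = 1`, the averaged intertwiner `g = ∑_{k < m} b ^ k * a ^ (m - k)` satisfies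
`b * g = g * a`. When `a ≡ b` modulo the maximal ideal, every summand reduces to `a ^ m = 1`, so
`g ≡ m`; hence `g` is invertible as soon as `m` is a unit, which for `m = 3` follows from
`3 + (-2) = 1` in a local ring where `2` is not a unit.
-/

theorem mul_sum_pow_mul_pow_eq_sum_pow_mul_pow_mul {A : Type*} [Ring A] {a b : A} {m : ℕ}
    (ha : a ^ m = 1) (hb : b ^ m = 1) :
    b * ∑ k ∈ range m, b ^ k * a ^ (m - k) = (∑ k ∈ range m, b ^ k * a ^ (m - k)) * a := by
  cases m with
  | zero => simp
  | succ n =>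
    have hshift : ∀ k ∈ range n, b * (b ^ k * a ^ (n + 1 - k)) =
        b ^ (k + 1) * a ^ (n + 1 - (k + 1)) * a := fun k hk => by
      rw [← mul_assoc, ← pow_succ', mul_assoc, ← pow_succ]
      have := mem_range.mp hk
      congr 2
      omega
    rw [mul_sum, sum_mul, sum_range_succ, sum_range_succ', sum_congr rfl hshift, ← mul_assoc,
      ← pow_succ', hb, Nat.sub_zero, ha, pow_zero, Nat.add_sub_cancel_left, pow_one, mul_one,
      one_mul]

theorem IsLocalRing.isUnit_of_residue_mapMatrix_eq {R ι : Type*} [CommRing R] [IsLocalRing R]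
    [Fintype ι] [DecidableEq ι] {M N : Matrix ι ι R} (hN : IsUnit N)
    (h : (residue R).mapMatrix M = (residue R).mapMatrix N) : IsUnit M := by
  rw [isUnit_iff_isUnit_det] at hN ⊢
  refine isUnit_of_map_unit (residue R) _ ?_
  rw [RingHom.map_det, h, ← RingHom.map_det]
  exact hN.map _

theorem IsLocalRing.exists_conj_eq_of_pow_eq_one {R ι : Type*} [CommRing R] [IsLocalRing R]
    [Fintype ι] [DecidableEq ι] {m : ℕ} (hm : IsUnit (m : R)) {a b : Matrix ι ι R}
    (ha : a ^ m = 1) (hb : b ^ m = 1) (hab : (residue R).mapMatrix a = (residue R).mapMatrix b) :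
    ∃ g : (Matrix ι ι R)ˣ, b = g * a * (g⁻¹ : (Matrix ι ι R)ˣ) := by
  have hred : (residue R).mapMatrix (∑ k ∈ range m, b ^ k * a ^ (m - k)) =
      (residue R).mapMatrix (m : Matrix ι ι R) := by
    have hterm : ∀ k ∈ range m, (residue R).mapMatrix (b ^ k * a ^ (m - k)) = 1 := fun k hk => by
      rw [map_mul, map_pow, map_pow, ← hab, ← pow_add, Nat.add_sub_cancel' (mem_range.mp hk).le,
        ← map_pow, ha, map_one]
    rw [map_sum, sum_congr rfl hterm, sum_const, card_range, nsmul_one, map_natCast]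
  have hmat : IsUnit (m : Matrix ι ι R) := map_natCast (algebraMap R (Matrix ι ι R)) m ▸ hm.map _
  obtain ⟨g, hg⟩ := isUnit_of_residue_mapMatrix_eq hmat hred
  refine ⟨g, (Units.eq_mul_inv_iff_mul_eq g).mpr ?_⟩
  rw [hg]
  exact mul_sum_pow_mul_pow_eq_sum_pow_mul_pow_mul ha hb

theorem IsLocalRing.isUnit_three_of_not_isUnit_two {R : Type*} [CommRing R] [IsLocalRing R]
    (h2 : ¬ IsUnit (2 : R)) : IsUnit (3 : R) :=
  (isUnit_or_isUnit_of_add_one (by norm_num : (3 : R) + -2 = 1)).resolve_right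
    (by rwa [IsUnit.neg_iff])

theorem stmt3_general {R : Type*} [CommRing R] [IsLocalRing R] (h2 : ¬ IsUnit (2 : R)) (n : ℕ)
    (a b : Matrix (Fin n) (Fin n) R) (ha : a ^ 3 = 1) (hb : b ^ 3 = 1)
    (hab : ∀ i j, a i j - b i j ∈ maximalIdeal R) :
    ∃ g : (Matrix (Fin n) (Fin n) R)ˣ,
      b = (g : Matrix (Fin n) (Fin n) R) * a * ((g⁻¹ : (Matrix (Fin n) (Fin n) R)ˣ) : Matrix (Fin n) (Fin n) R) := by
  have hred : (residue R).mapMatrix a = (residue R).mapMatrix b := by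
    ext i j
    rw [RingHom.mapMatrix_apply, RingHom.mapMatrix_apply, map_apply, map_apply,
      ← sub_eq_zero, ← map_sub, residue_eq_zero_iff]
    exact hab i j
  exact exists_conj_eq_of_pow_eq_one (m := 3) (by exact_mod_cast isUnit_three_of_not_isUnit_two h2)
    ha hb hred

/-- Over a commutative local ring `R` in which `2` is not invertible, if `a, b` are
`n × n` matrices with `a³ = b³ = 1`, the entries of `a` lie in the prime subring,
and `a ≡ b` modulo the maximal ideal, then `a` and `b` are conjugate in `GL_n(R)`. -/
theorem stmt3 {R : Type*} [CommRing R] [IsLocalRing R] (h2 : ¬ IsUnit (2 : R)) (n : ℕ)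
    (a b : Matrix (Fin n) (Fin n) R) (ha : a ^ 3 = 1) (hb : b ^ 3 = 1)
    (haZ : ∀ i j, a i j ∈ (⊥ : Subring R))
    (hab : ∀ i j, a i j - b i j ∈ maximalIdeal R) :
    ∃ g : (Matrix (Fin n) (Fin n) R)ˣ,
      b = (g : Matrix (Fin n) (Fin n) R) * a * ((g⁻¹ : (Matrix (Fin n) (Fin n) R)ˣ) : Matrix (Fin n) (Fin n) R) :=
  stmt3_general h2 n a b ha hb hab
end

section
/- Let A be an n×n matrix with integer entries satisfying A³ = 1. Then there exist nonnegative integers r and p with n = r + 2p such that the characteristic polynomial of A equals (X − 1)^r · (X² + X + 1)^p. In particular, the multiplicities of the two primitive cube roots of unity as eigenvalues of A (over an extension containing them) are equal. -/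
open Polynomial

set_option synthInstance.maxHeartbeats 1000000 in

/-- If `A` is an `n × n` integer matrix with `A³ = 1`, then there are `r, p` with
`n = r + 2p` such that the characteristic polynomial of `A` is
`(X - 1)^r * (X² + X + 1)^p`. -/
theorem stmt4 (n : ℕ) (A : Matrix (Fin n) (Fin n) ℤ) (hA : A ^ 3 = 1) :
    ∃ r p : ℕ, n = r + 2 * p ∧
      A.charpoly = (X - 1) ^ r * (X ^ 2 + X + 1) ^ p := by
  have h3 : Fact (Nat.Prime 3) := ⟨by norm_num⟩
  set q1 : ℤ[X] := cyclotomic 1 ℤ with hq1def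
  set q2 : ℤ[X] := cyclotomic 3 ℤ with hq2def
  have hq1 : q1 = X - 1 := cyclotomic_one ℤ
  have hq2 : q2 = X ^ 2 + X + 1 := by
    rw [hq2def, cyclotomic_prime ℤ 3]
    simp [Finset.sum_range_succ]
    ring
  -- Step 1: charpoly ∣ (X^3 - 1)^n
  have hdvd : A.charpoly ∣ ((X : ℤ[X]) ^ 3 - 1) ^ n := by
    set s : Matrix (Fin n) (Fin n) ℤ[X] := Matrix.scalar (Fin n) X with hs
    set a : Matrix (Fin n) (Fin n) ℤ[X] := (C : ℤ →+* ℤ[X]).mapMatrix A with ha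
    have hc : Commute s a := by
      rw [hs]
      exact (Matrix.scalar_commute X (fun r => Commute.all _ _) a)
    have key : (∑ i ∈ Finset.range 3, s ^ i * a ^ (3 - 1 - i)) * (s - a) = s ^ 3 - a ^ 3 :=
      hc.geom_sum₂_mul 3
    have h3m : s ^ 3 - a ^ 3 = Matrix.scalar (Fin n) ((X : ℤ[X]) ^ 3 - 1) := by
      rw [hs, ha, ← map_pow, ← map_pow, hA, map_one, map_sub, map_one]
    have hdet : (∑ i ∈ Finset.range 3, s ^ i * a ^ (3 - 1 - i)).det * A.charpoly
        = ((X : ℤ[X]) ^ 3 - 1) ^ n := by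
      have := congrArg Matrix.det key
      rw [Matrix.det_mul, h3m] at this
      rw [Matrix.charpoly, Matrix.charmatrix, ← hs, ← ha]
      rw [this]
      rw [show Matrix.scalar (Fin n) ((X : ℤ[X]) ^ 3 - 1)
          = Matrix.diagonal (fun _ => (X : ℤ[X]) ^ 3 - 1) from rfl,
        Matrix.det_diagonal, Finset.prod_const]
      simp
    exact Dvd.intro_left _ hdet
  have hfac : ((X : ℤ[X]) ^ 3 - 1) = q1 * q2 := by rw [hq1, hq2]; ring
  have hdvd' : A.charpoly ∣ q1 ^ n * q2 ^ n := by
    rw [← mul_pow, ← hfac]; exact hdvd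
  have hp1 : Prime q1 := (UniqueFactorizationMonoid.irreducible_iff_prime.mp
    (cyclotomic.irreducible one_pos))
  have hp2 : Prime q2 := (UniqueFactorizationMonoid.irreducible_iff_prime.mp
    (cyclotomic.irreducible (by norm_num)))
  obtain ⟨d1, d2, hd1, hd2, heq⟩ := exists_dvd_and_dvd_of_dvd_mul hdvd'
  obtain ⟨r, -, hr⟩ := (dvd_prime_pow hp1 n).mp hd1
  obtain ⟨p, -, hp⟩ := (dvd_prime_pow hp2 n).mp hd2
  have hassoc : Associated A.charpoly (q1 ^ r * q2 ^ p) := by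
    rw [heq]; exact hr.mul_mul hp
  have hmono : (q1 ^ r * q2 ^ p).Monic :=
    ((cyclotomic.monic 1 ℤ).pow r).mul ((cyclotomic.monic 3 ℤ).pow p)
  have hEq : A.charpoly = q1 ^ r * q2 ^ p :=
    eq_of_monic_of_associated A.charpoly_monic hmono hassoc
  refine ⟨r, p, ?_, by rw [hEq, hq1, hq2]⟩
  have hn : A.charpoly.natDegree = n := by
    rw [Matrix.charpoly_natDegree_eq_dim, Fintype.card_fin]
  rw [hEq] at hn
  rw [((cyclotomic.monic 1 ℤ).pow r).natDegree_mul ((cyclotomic.monic 3 ℤ).pow p),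
    natDegree_pow, natDegree_pow, natDegree_cyclotomic, natDegree_cyclotomic] at hn
  simp [Nat.totient_prime (by norm_num : Nat.Prime 3)] at hn
  omega
end

section
/- Let R be a commutative local ring in which 2 is not invertible, and let A be an n×n matrix with integer entries satisfying A³ = 1. Then there exist nonnegative integers r and p with n = r + 2p such that the image of A in M_n(R) is conjugate by a matrix in GL_n(R) to the block-diagonal matrix consisting of the r×r identity block followed by p copies of the 2×2 block [[0, −1], [1, −1]]. -/
/-!
Over `𝔽₂` the polynomial `X ^ 2 + X + 1` is irreducible and coprime to `X - 1`, so the reduction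
`A₂` of `A` splits `𝔽₂ⁿ` into the fixed space of `A₂` and a vector space over
`𝔽₂[X]/(X ^ 2 + X + 1) = 𝔽₄` on which `A₂` acts by a primitive cube root of unity. Bases of the
two pieces give `P ∈ GL_n(𝔽₂)` with `A₂ P = P N`, where `N` is the block normal form.

To lift, take any integer matrix `G` reducing to `P` and average over the group of order three:
`H = ∑_{k < 3} A ^ k G N ^ (3 - k)` satisfies `A H = H N` over `ℤ`, and `H ≡ 3 P ≡ P` modulo `2`.
So `det H` is odd, hence a unit in `R`, whose maximal ideal contains `2`.
-/

open Matrix Polynomial Module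

theorem LinearMap.aeval_restrict_apply {R M : Type*} [CommSemiring R] [AddCommMonoid M]
    [Module R M]
    {f : Module.End R M} {N : Submodule R M} (h : ∀ x ∈ N, f x ∈ N) (p : R[X]) (x : N) :
    (aeval (f.restrict h) p x : M) = aeval f p x := by
  induction p using Polynomial.induction_on' with
  | add p q hp hq => simp [hp, hq]
  | monomial n a =>
    simp only [aeval_monomial, Module.End.mul_apply, Module.algebraMap_end_apply,
      Submodule.coe_smul]
    rw [Module.End.pow_restrict]
    rfl

theorem Module.End.mapsTo_ker_aeval {R M : Type*} [CommSemiring R] [AddCommMonoid M]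
    [Module R M]
    (f : Module.End R M) (p : R[X]) :
    ∀ x ∈ LinearMap.ker (aeval f p), f x ∈ LinearMap.ker (aeval f p) := by
  intro x hx
  rw [LinearMap.mem_ker] at hx ⊢
  have hcomm : aeval f p * f = f * aeval f p := by
    simpa using congrArg (aeval f) (mul_comm p X)
  rw [← Module.End.mul_apply, hcomm, Module.End.mul_apply, hx, map_zero]

/-- `V` is a vector space over the field `K[X]/(q)`, in which `X` acts as `φ`; multiply a power
basis of that field by a basis of `V` over it. -/
theorem Module.End.exists_basis_pow_of_irreducible {K V : Type*} [Field K] [AddCommGroup V]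
    [Module K V] [FiniteDimensional K V] (φ : Module.End K V) {q : K[X]} (hq : Irreducible q)
    (hφ : aeval φ q = 0) :
    ∃ (p : ℕ) (v : Fin p → V) (b : Basis (Fin q.natDegree × Fin p) K V),
      ∀ i j, b (i, j) = (φ ^ (i : ℕ)) (v j) := by
  have := Fact.mk hq
  let f : AdjoinRoot q →ₐ[K] Module.End K V :=
    Ideal.Quotient.liftₐ _ (aeval φ) fun a ha => by
      obtain ⟨c, rfl⟩ := Ideal.mem_span_singleton'.mp ha
      rw [map_mul, hφ, mul_zero]
  let _ : Module (AdjoinRoot q) V := Module.compHom V f.toRingHom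
  have : IsScalarTower K (AdjoinRoot q) V :=
    ⟨fun k a v => by
      change f (k • a) v = k • f a v
      rw [map_smul]
      rfl⟩
  have : FiniteDimensional (AdjoinRoot q) V := Module.Finite.of_restrictScalars_finite K _ _
  let c := Module.finBasis (AdjoinRoot q) V
  let pb := AdjoinRoot.powerBasis hq.ne_zero
  refine ⟨_, c, (pb.basis.smulTower c).reindex
    ((finCongr (AdjoinRoot.powerBasis_dim hq.ne_zero)).prodCongr (Equiv.refl _)), fun i j => ?_⟩
  rw [Basis.reindex_apply, Basis.smulTower_apply]
  simp only [Equiv.prodCongr_symm, Equiv.prodCongr_apply, finCongr_symm, Prod.map,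
    finCongr_apply, Equiv.refl_symm, Equiv.refl_apply, PowerBasis.basis_eq_pow]
  have hgen : f pb.gen = φ := aeval_X φ
  change (f _) _ = _
  rw [map_pow, hgen, Fin.val_cast]

theorem natDegree_X_sq_add_X_add_one {K : Type*} [Semiring K] [Nontrivial K] :
    (X ^ 2 + X + 1 : K[X]).natDegree = 2 := by
  compute_degree!

theorem isCoprime_X_sub_one_X_sq_add_X_add_one {K : Type*} [Field K]
    (hq : Irreducible (X ^ 2 + X + 1 : K[X])) : IsCoprime (X - 1 : K[X]) (X ^ 2 + X + 1) := by
  refine (hq.coprime_iff_not_dvd.mpr fun hdvd => ?_).symm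
  have hle := natDegree_le_of_dvd hdvd (X_sub_C_ne_zero 1)
  have h1 : (X - 1 : K[X]).natDegree = 1 := by compute_degree!
  rw [natDegree_X_sq_add_X_add_one, h1] at hle
  omega

theorem irreducible_X_sq_add_X_add_one_zmod_two : Irreducible (X ^ 2 + X + 1 : (ZMod 2)[X]) :=
  irreducible_of_degree_le_three_of_not_isRoot (by rw [natDegree_X_sq_add_X_add_one]; decide)
    fun x => by
      simp only [IsRoot.def, eval_add, eval_pow, eval_X, eval_one]
      revert x
      decide

theorem Module.End.exists_basis_toMatrix_eq_blockDiagonal {K V : Type*} [Field K]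
    [AddCommGroup V] [Module K V] [FiniteDimensional K V]
    (hq : Irreducible (X ^ 2 + X + 1 : K[X])) (φ : Module.End K V)
    (hφ : aeval φ (X ^ 2 + X + 1 : K[X]) = 0) :
    ∃ (p : ℕ) (b : Basis (Fin 2 × Fin p) K V),
      LinearMap.toMatrix b b φ = blockDiagonal fun _ => !![0, -1; 1, -1] := by
  obtain ⟨p, v, b, hb⟩ := φ.exists_basis_pow_of_irreducible hq hφ
  let b' := b.reindex
    ((finCongr (natDegree_X_sq_add_X_add_one (K := K))).prodCongr (Equiv.refl _))
  have hb' : ∀ i j, b' (i, j) = (φ ^ (i : ℕ)) (v j) := fun i j => by simp [b', hb]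
  have h0 : ∀ j, φ (b' (0, j)) = b' (1, j) := fun j => by simp [hb']
  have h1 : ∀ j, φ (b' (1, j)) = -b' (0, j) - b' (1, j) := fun j => by
    have hv := congrArg (· (v j)) hφ
    simp only [map_add, aeval_X_pow, aeval_X, map_one, LinearMap.add_apply, LinearMap.zero_apply,
      Module.End.one_apply] at hv
    simp only [hb', Fin.val_zero, pow_zero, Module.End.one_apply, Fin.val_one, pow_one]
    rw [← Module.End.mul_apply, ← sq]
    linear_combination (norm := module) hv
  refine ⟨p, b', ?_⟩
  ext ⟨s, j⟩ ⟨t, k⟩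
  rw [LinearMap.toMatrix_apply, blockDiagonal_apply]
  fin_cases t
  · rw [Fin.zero_eta, h0, b'.repr_self]
    fin_cases s <;> by_cases hjk : j = k <;> simp [hjk]
  · rw [Fin.mk_one, h1]
    fin_cases s <;> by_cases hjk : j = k <;> simp [hjk]

def orderThreeNormalForm (R : Type*) [Ring R] (r p : ℕ) :
    Matrix (Fin r ⊕ Fin 2 × Fin p) (Fin r ⊕ Fin 2 × Fin p) R :=
  fromBlocks 1 0 0 (blockDiagonal fun _ => !![0, -1; 1, -1])

theorem orderThreeNormalForm_pow_three (R : Type*) [Ring R] (r p : ℕ) :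
    orderThreeNormalForm R r p ^ 3 = 1 := by
  have hD : (!![0, -1; 1, -1] : Matrix (Fin 2) (Fin 2) R) ^ 3 = 1 := by
    rw [pow_three, mul_fin_two, mul_fin_two, one_fin_two]
    norm_num
  rw [orderThreeNormalForm, fromBlocks_diagonal_pow, ← blockDiagonal_pow, one_pow]
  simp only [Pi.pow_def, hD]
  exact (congrArg (fromBlocks 1 0 0) blockDiagonal_one).trans fromBlocks_one

theorem orderThreeNormalForm_submatrix_pow_three (R : Type*) [Ring R] {r p : ℕ} {ι : Type*}
    [Fintype ι] [DecidableEq ι] (e : ι ≃ Fin r ⊕ Fin 2 × Fin p) :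
    (orderThreeNormalForm R r p).submatrix e e ^ 3 = 1 := by
  change reindexRingEquiv R e.symm (orderThreeNormalForm R r p) ^ 3 = 1
  rw [← map_pow, orderThreeNormalForm_pow_three, map_one]

theorem orderThreeNormalForm_submatrix_map {R S : Type*} [Ring R] [Ring S] (f : R →+* S)
    {r p : ℕ} {l m : Type*} (e₁ : l → Fin r ⊕ Fin 2 × Fin p) (e₂ : m → Fin r ⊕ Fin 2 × Fin p) :
    ((orderThreeNormalForm R r p).submatrix e₁ e₂).map f =
      (orderThreeNormalForm S r p).submatrix e₁ e₂ := by
  have hD : (!![0, -1; 1, -1] : Matrix (Fin 2) (Fin 2) R).map f = !![0, -1; 1, -1] := by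
    ext i j
    fin_cases i <;> fin_cases j <;> simp
  rw [← submatrix_map, orderThreeNormalForm, fromBlocks_map, blockDiagonal_map _ _ f.map_zero, hD,
    Matrix.map_one _ f.map_zero f.map_one, Matrix.map_zero _ f.map_zero,
    Matrix.map_zero _ f.map_zero, orderThreeNormalForm]

theorem Module.End.exists_basis_toMatrix_eq_orderThreeNormalForm {K V : Type*} [Field K]
    [AddCommGroup V] [Module K V] [FiniteDimensional K V]
    (hq : Irreducible (X ^ 2 + X + 1 : K[X])) (φ : Module.End K V) (hφ : φ ^ 3 = 1) :
    ∃ (r p : ℕ) (b : Basis (Fin r ⊕ Fin 2 × Fin p) K V),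
      LinearMap.toMatrix b b φ = orderThreeNormalForm K r p := by
  set U := LinearMap.ker (aeval φ (X - 1 : K[X]))
  set W := LinearMap.ker (aeval φ (X ^ 2 + X + 1 : K[X]))
  have hcop := isCoprime_X_sub_one_X_sq_add_X_add_one hq
  have hUW : IsCompl U W := by
    refine ⟨disjoint_ker_aeval_of_isCoprime φ hcop, ?_⟩
    have hann : aeval φ ((X - 1) * (X ^ 2 + X + 1) : K[X]) = 0 := by
      rw [show (X - 1) * (X ^ 2 + X + 1) = (X ^ 3 - 1 : K[X]) by ring]
      simp [hφ]
    rw [codisjoint_iff, sup_ker_aeval_eq_ker_aeval_mul_of_coprime φ hcop, hann,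
      LinearMap.ker_zero]
  let φU := φ.restrict (φ.mapsTo_ker_aeval (X - 1 : K[X]))
  let φW := φ.restrict (φ.mapsTo_ker_aeval (X ^ 2 + X + 1 : K[X]))
  have hφU : φU = 1 := by
    ext x
    exact (by simpa [sub_eq_zero] using x.2 : φ x = x)
  have hφW : aeval φW (X ^ 2 + X + 1 : K[X]) = 0 := by
    ext x
    exact (LinearMap.aeval_restrict_apply _ _ x).trans x.2
  obtain ⟨p, bW, hbW⟩ := Module.End.exists_basis_toMatrix_eq_blockDiagonal hq φW hφW
  let e := Submodule.prodEquivOfIsCompl U W hUW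
  have he : e.symm.toLinearMap ∘ₗ φ ∘ₗ e.toLinearMap = φU.prodMap φW := by
    rw [LinearEquiv.toLinearMap_symm_comp_eq]
    ext x <;> simp [e, φU, φW]
  refine ⟨_, p, ((Module.finBasis K U).prod bW).map e, ?_⟩
  rw [LinearMap.toMatrix_map_left, LinearMap.toMatrix_map_right, he, LinearMap.toMatrix_prodMap,
    hφU, LinearMap.toMatrix_one, hbW]
  rfl

theorem Matrix.exists_isUnit_mul_eq_mul_orderThreeNormalForm {K ι : Type*} [Field K]
    [Fintype ι] [DecidableEq ι] (hq : Irreducible (X ^ 2 + X + 1 : K[X])) (A : Matrix ι ι K)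
    (hA : A ^ 3 = 1) :
    ∃ (r p : ℕ) (e : ι ≃ Fin r ⊕ Fin 2 × Fin p) (P : Matrix ι ι K),
      IsUnit P ∧ A * P = P * (orderThreeNormalForm K r p).submatrix e e := by
  obtain ⟨r, p, b, hb⟩ := Module.End.exists_basis_toMatrix_eq_orderThreeNormalForm hq (toLin' A)
    (by rw [← toLin'_pow, hA, toLin'_one]; rfl)
  let std := Pi.basisFun K ι
  let e := std.indexEquiv b
  have hA' : LinearMap.toMatrix std std (toLin' A) = A := LinearMap.toMatrix_toLin _ _ A
  have key : A * std.toMatrix b = std.toMatrix b * orderThreeNormalForm K r p := by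
    nth_rw 1 [← hA']
    rw [← hb, linearMap_toMatrix_mul_basis_toMatrix, basis_toMatrix_mul_linearMap_toMatrix]
  refine ⟨r, p, e, (std.toMatrix b).submatrix id e, ?_, ?_⟩
  · have := std.invertibleToMatrix (b.reindex e.symm)
    convert isUnit_of_invertible (std.toMatrix (b.reindex e.symm)) using 1
    ext i j
    simp [Basis.toMatrix_apply]
  · rw [submatrix_mul_equiv, ← key]
    rfl

section Averaging

variable {S : Type*} [Semiring S]

theorem mul_sum_pow_mul_mul_pow_sub_eq_sum_mul {M N : S} (G : S) {d : ℕ} (hM : M ^ d = 1)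
    (hN : N ^ d = 1) :
    M * ∑ k ∈ Finset.range d, M ^ k * G * N ^ (d - k) =
      (∑ k ∈ Finset.range d, M ^ k * G * N ^ (d - k)) * N := by
  obtain _ | m := d
  · simp
  rw [Finset.mul_sum, Finset.sum_mul, Finset.sum_range_succ, Finset.sum_range_succ']
  congr 1
  · refine Finset.sum_congr rfl fun k hk => ?_
    rw [Finset.mem_range] at hk
    rw [show m + 1 - k = m - k + 1 by omega, show m + 1 - (k + 1) = m - k by omega,
      pow_succ N, pow_succ' M]
    simp only [mul_assoc]
  · rw [Nat.add_sub_cancel_left, pow_one, ← mul_assoc, ← mul_assoc, ← pow_succ', hM, one_mul,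
      pow_zero, one_mul, Nat.sub_zero, hN, mul_one]

theorem sum_pow_mul_mul_pow_sub_eq_nsmul {M N G : S} {d : ℕ} (h : M * G = G * N)
    (hN : N ^ d = 1) :
    ∑ k ∈ Finset.range d, M ^ k * G * N ^ (d - k) = d • G := by
  have hk : ∀ k ∈ Finset.range d, M ^ k * G * N ^ (d - k) = G := fun k hk => by
    rw [← (SemiconjBy.pow_right h.symm k).eq, mul_assoc, ← pow_add,
      Nat.add_sub_cancel' (Finset.mem_range.mp hk).le, hN, mul_one]
  rw [Finset.sum_congr rfl hk, Finset.sum_const, Finset.card_range]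

end Averaging

theorem IsLocalRing.isUnit_intCast_of_isUnit_zmod {R : Type*} [CommRing R] [IsLocalRing R]
    {ℓ : ℕ} (hℓ : ¬IsUnit (ℓ : R)) {k : ℤ} (hk : IsUnit (k : ZMod ℓ)) : IsUnit (k : R) := by
  obtain ⟨u, hu⟩ := hk.exists_right_inv
  obtain ⟨c, hc⟩ : (ℓ : ℤ) ∣ k * (u.cast : ℤ) - 1 := by
    rw [← ZMod.intCast_zmod_eq_zero_iff_dvd]
    push_cast
    rw [hu, sub_self]
  have hsum : (k : R) * (u.cast : ℤ) + ℓ * (-c : ℤ) = 1 := by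
    rw [← Int.cast_natCast, ← Int.cast_mul, ← Int.cast_mul, ← Int.cast_add, mul_neg, ← hc]
    simp
  rcases IsLocalRing.isUnit_or_isUnit_of_add_one hsum with h | h
  · exact isUnit_of_mul_isUnit_left h
  · exact absurd (isUnit_of_mul_isUnit_left h) hℓ

theorem Matrix.isUnit_map_intCast_of_isUnit_map_zmod {R ι : Type*} [CommRing R] [IsLocalRing R]
    [Fintype ι] [DecidableEq ι] {ℓ : ℕ} (hℓ : ¬IsUnit (ℓ : R)) {H : Matrix ι ι ℤ}
    (hH : IsUnit (H.map (Int.cast : ℤ → ZMod ℓ))) : IsUnit (H.map (Int.cast : ℤ → R)) := by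
  rw [isUnit_iff_isUnit_det] at hH ⊢
  change IsUnit ((Int.castRingHom (ZMod ℓ)).mapMatrix H).det at hH
  change IsUnit ((Int.castRingHom R).mapMatrix H).det
  rw [← RingHom.map_det] at hH ⊢
  exact IsLocalRing.isUnit_intCast_of_isUnit_zmod hℓ hH

theorem Matrix.exists_isUnit_mul_eq_mul_of_zmod {R ι : Type*} [CommRing R] [IsLocalRing R]
    [Fintype ι] [DecidableEq ι] {ℓ d : ℕ} (hℓ : ¬IsUnit (ℓ : R)) (hd : IsUnit (d : ZMod ℓ))
    {A N : Matrix ι ι ℤ} (hA : A ^ d = 1) (hN : N ^ d = 1) {P : Matrix ι ι (ZMod ℓ)}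
    (hP : IsUnit P) (hAP : A.map Int.cast * P = P * N.map Int.cast) :
    ∃ H : Matrix ι ι R, IsUnit H ∧ A.map Int.cast * H = H * N.map Int.cast := by
  set H := ∑ k ∈ Finset.range d, A ^ k * P.map (fun a => (a.cast : ℤ)) * N ^ (d - k)
  have hHP : (Int.castRingHom (ZMod ℓ)).mapMatrix H = d • P := by
    have hP' : (Int.castRingHom (ZMod ℓ)).mapMatrix (P.map fun a => (a.cast : ℤ)) = P := by
      ext i j
      simp
    simp only [H, map_sum, map_mul, map_pow, hP']
    exact sum_pow_mul_mul_pow_sub_eq_nsmul hAP (by rw [← map_pow, hN, map_one])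
  refine ⟨H.map Int.cast, Matrix.isUnit_map_intCast_of_isUnit_map_zmod hℓ ?_, ?_⟩
  · change IsUnit ((Int.castRingHom (ZMod ℓ)).mapMatrix H)
    rw [hHP, ← Nat.cast_smul_eq_nsmul (ZMod ℓ), isUnit_iff_isUnit_det, det_smul]
    exact (hd.pow _).mul ((isUnit_iff_isUnit_det P).mp hP)
  · change (Int.castRingHom R).mapMatrix A * (Int.castRingHom R).mapMatrix H =
      (Int.castRingHom R).mapMatrix H * (Int.castRingHom R).mapMatrix N
    rw [← map_mul, ← map_mul, mul_sum_pow_mul_mul_pow_sub_eq_sum_mul _ hA hN]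

/-- Let `R` be a commutative local ring in which `2` is not invertible, and let `A` be
an `n × n` integer matrix with `A³ = 1`.  Then there are `r, p` with `n = r + 2p` such
that the image of `A` in `M_n(R)` is conjugate in `GL_n(R)` to the block-diagonal
matrix with an `r × r` identity block and `p` copies of the block `[[0, -1], [1, -1]]`. -/
theorem stmt5 {R : Type*} [CommRing R] [IsLocalRing R] (h2 : ¬ IsUnit (2 : R)) (n : ℕ)
    (A : Matrix (Fin n) (Fin n) ℤ) (hA : A ^ 3 = 1) :
    ∃ r p : ℕ, n = r + 2 * p ∧
      ∃ (e : Fin n ≃ (Fin r ⊕ Fin 2 × Fin p)) (g : (Matrix (Fin n) (Fin n) R)ˣ),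
        A.map (Int.cast : ℤ → R) =
          (g : Matrix (Fin n) (Fin n) R) *
            ((Matrix.fromBlocks (1 : Matrix (Fin r) (Fin r) R) 0 0
                (Matrix.blockDiagonal fun _ : Fin p =>
                  (!![0, -1; 1, -1] : Matrix (Fin 2) (Fin 2) R))).submatrix e e) *
            ((g⁻¹ : (Matrix (Fin n) (Fin n) R)ˣ) : Matrix (Fin n) (Fin n) R) := by
  obtain ⟨r, p, e, P, hP, hAP⟩ := Matrix.exists_isUnit_mul_eq_mul_orderThreeNormalForm
    irreducible_X_sq_add_X_add_one_zmod_two ((Int.castRingHom (ZMod 2)).mapMatrix A)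
    (by rw [← map_pow, hA, map_one])
  obtain ⟨H, hH, hAH⟩ := Matrix.exists_isUnit_mul_eq_mul_of_zmod (ℓ := 2) (d := 3)
    (by exact_mod_cast h2) (.of_mul_eq_one 1 (by decide)) hA
    (orderThreeNormalForm_submatrix_pow_three ℤ e) hP
    (hAP.trans (by rw [← orderThreeNormalForm_submatrix_map (Int.castRingHom (ZMod 2))]; rfl))
  refine ⟨r, p, by simpa using Fintype.card_congr e, e, hH.unit, ?_⟩
  rw [Units.eq_mul_inv_iff_mul_eq, IsUnit.unit_spec, hAH]
  exact congrArg (H * ·) (orderThreeNormalForm_submatrix_map (Int.castRingHom R) e e)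
end

section
/- Let R be a commutative ring in which every element is the sum of two units, and let ρ : R → R be a map that is additive (ρ(x + y) = ρ(x) + ρ(y) for all x, y ∈ R), satisfies ρ(1) = 1, and is multiplicative on units (ρ(uv) = ρ(u)ρ(v) for all units u, v of R, with ρ(u) a unit for every unit u). Then ρ is multiplicative on all of R, i.e., ρ is a ring homomorphism; if moreover ρ is injective, it is a ring isomorphism from R onto the subring ρ(R) of R. -/
/-- Let `R` be a commutative ring in which every element is a sum of two units, and let
`ρ : R → R` be additive, send `1` to `1`, send units to units, and be multiplicative on
units.  Then `ρ` is multiplicative on all of `R` (hence a ring homomorphism); if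
moreover `ρ` is injective, it is a ring isomorphism from `R` onto the subring `ρ(R)`. -/
theorem stmt10 {R : Type*} [CommRing R]
    (hsum : ∀ x : R, ∃ u v : Rˣ, x = (u : R) + (v : R))
    (ρ : R → R)
    (hadd : ∀ x y : R, ρ (x + y) = ρ x + ρ y)
    (hone : ρ 1 = 1)
    (hunit : ∀ u : Rˣ, IsUnit (ρ (u : R)))
    (hmul : ∀ u v : Rˣ, ρ ((u : R) * (v : R)) = ρ (u : R) * ρ (v : R)) :
    (∀ x y : R, ρ (x * y) = ρ x * ρ y) ∧
    (Function.Injective ρ →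
      ∃ (S : Subring R) (φ : R ≃+* S),
        (S : Set R) = Set.range ρ ∧ ∀ x : R, (φ x : R) = ρ x) := by
  have hmul' : ∀ x y : R, ρ (x * y) = ρ x * ρ y := by
    intro x y
    obtain ⟨u, v, rfl⟩ := hsum x
    obtain ⟨s, t, rfl⟩ := hsum y
    rw [add_mul, mul_add, mul_add, hadd, hadd, hadd, hmul, hmul, hmul, hmul,
      hadd, hadd]
    ring
  refine ⟨hmul', fun hinj => ?_⟩
  have hzero : ρ 0 = 0 := by
    have h := hadd 0 0
    rw [add_zero] at h
    exact (left_eq_add.mp h)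
  let f : R →+* R :=
    { toFun := ρ, map_one' := hone, map_mul' := hmul',
      map_zero' := hzero, map_add' := hadd }
  refine ⟨f.range, RingEquiv.ofLeftInverse (g := Function.invFun f) (f := f) (Function.leftInverse_invFun hinj), ?_, fun x => rfl⟩
  ext y
  simp [f, RingHom.mem_range, Set.mem_range]
end
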